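/- arXiv:0909.3356 — 6 statements merged into one kernel-verified Lean document; each statement's English description precedes it below -/
import Mathlib

section
/- Let S be a set of links in the plane, each link i having transmitter t_i and receiver r_i with |t_i − r_i| ≤ r_tx for all i. Suppose |t_j − r_i| ≥ r_xcl for all distinct i, j ∈ S, where r_xcl > r_tx. Then for every i ∈ S, Σ_{j ∈ S, j ≠ i} |t_j − r_i|^{-α} ≤ k(α)·(r_xcl − r_tx)^{-α}, where k(α) = Σ_{k=1}^∞ 4·⌈π(2k+2)⌉·k^{-α} and α > 2. -/
/-!
Put `d = r_xcl - r_tx`. By the triangle inequality the transmitters `t_j`, `j ≠ i`, are pairwise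
at distance `≥ d` and at distance `≥ d` from `r_i`. Sorting them into the annuli
`k d ≤ |t_j - r_i| < (k + 1) d`, `k ≥ 1`, the disks of radius `d / 2` around the transmitters of
the `k`-th annulus are disjoint, so comparing areas leaves room for at most
`16 k + 8 ≤ 4 ⌈π (2 k + 2)⌉` of them, each contributing at most `(k d)^(-α)`; for `α > 2` the
resulting series converges.
-/

open MeasureTheory Metric Finset Real

local notation "ℝ²" => EuclideanSpace ℝ (Fin 2)

lemma measureReal_ball_fin_two (x : ℝ²) {ρ : ℝ} (hρ : 0 ≤ ρ) :
    volume.real (ball x ρ) = π * ρ ^ 2 := by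
  rw [measureReal_def, EuclideanSpace.volume_ball_fin_two, ← ENNReal.ofReal_pow hρ,
    ← ENNReal.ofReal_mul (by positivity), ENNReal.toReal_ofReal (by positivity), mul_comm]

/-- The disks of radius `d / 2` around the points are disjoint, disjoint from the disk of
radius `(k - 1/2) d` around `x`, and all lie in the disk of radius `(k + 3/2) d`; compare areas. -/
lemma card_le_of_separated_of_mem_annulus {ι : Type*} {s : Finset ι} {f : ι → ℝ²} {x : ℝ²}
    {d k : ℝ} (hd : 0 < d) (hk : 1 / 2 ≤ k)
    (hsep : (s : Set ι).Pairwise fun a b => d ≤ dist (f a) (f b))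
    (hlo : ∀ a ∈ s, k * d ≤ dist (f a) x) (hhi : ∀ a ∈ s, dist (f a) x < (k + 1) * d) :
    (#s : ℝ) ≤ 16 * k + 8 := by
  set disks := ⋃ a ∈ s, ball (f a) (d / 2)
  have hdisks : volume.real disks = #s * (π * (d / 2) ^ 2) := by
    rw [measureReal_biUnion_finset
      (fun a ha b hb hab => ball_disjoint_ball (by linarith [hsep ha hb hab]))
      (fun _ _ => measurableSet_ball)]
    simp [measureReal_ball_fin_two _ (by positivity : 0 ≤ d / 2)]
  have hdisj : Disjoint disks (ball x ((k - 1 / 2) * d)) := by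
    refine Set.disjoint_left.2 fun y hy hyx => ?_
    obtain ⟨a, ha, hya⟩ := Set.mem_iUnion₂.1 hy
    have := dist_triangle (f a) y x
    rw [mem_ball] at hya hyx
    linarith [hlo a ha, dist_comm (f a) y]
  have hsub : disks ∪ ball x ((k - 1 / 2) * d) ⊆ ball x ((k + 3 / 2) * d) := by
    refine Set.union_subset (Set.iUnion₂_subset fun a ha y hya => ?_)
      (ball_subset_ball (by nlinarith))
    rw [mem_ball] at hya ⊢
    linarith [hhi a ha, dist_triangle y (f a) x]
  have harea := measureReal_mono (μ := volume) hsub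
  rw [measureReal_union hdisj measurableSet_ball
      (measure_ne_top_of_subset (Set.subset_union_left.trans hsub) measure_ball_lt_top.ne),
    hdisks, measureReal_ball_fin_two _ (by nlinarith), measureReal_ball_fin_two _ (by nlinarith)]
    at harea
  have : 0 < π * d ^ 2 := by positivity
  nlinarith

lemma summable_mul_rpow_neg_of_le_linear {c : ℕ → ℝ} {C α : ℝ} (hα : 2 < α)
    (hc₀ : ∀ n, 0 ≤ c n) (hc : ∀ n, c n ≤ C * ((n : ℝ) + 1)) :
    Summable fun n : ℕ => c n * ((n : ℝ) + 1) ^ (-α) := by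
  have hp : Summable fun n : ℕ => ((n : ℝ) + 1) ^ (1 - α) := by
    simpa using (summable_nat_add_iff 1).2 (Real.summable_nat_rpow.2 (by linarith : 1 - α < -1))
  refine (hp.mul_left C).of_nonneg_of_le (fun n => mul_nonneg (hc₀ n) (by positivity)) fun n => ?_
  have hn : (0 : ℝ) < n + 1 := by positivity
  rw [sub_eq_add_neg, Real.rpow_add hn, Real.rpow_one, ← mul_assoc]
  exact mul_le_mul_of_nonneg_right (hc n) (by positivity)

theorem sum_dist_rpow_neg_le_of_separated {ι : Type*} {s : Finset ι} {f : ι → ℝ²} {x : ℝ²}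
    {d α : ℝ} (hd : 0 < d) (hα : 2 < α)
    (hsep : (s : Set ι).Pairwise fun a b => d ≤ dist (f a) (f b))
    (hfar : ∀ a ∈ s, d ≤ dist (f a) x) :
    ∑ a ∈ s, dist (f a) x ^ (-α) ≤
      (∑' n : ℕ, (16 * ((n : ℝ) + 1) + 8) * ((n : ℝ) + 1) ^ (-α)) * d ^ (-α) := by
  classical
  set m : ι → ℕ := fun a => ⌊dist (f a) x / d - 1⌋₊
  have hm_lo : ∀ a ∈ s, ((m a : ℝ) + 1) * d ≤ dist (f a) x := fun a ha => by
    have := Nat.floor_le (a := dist (f a) x / d - 1)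
      (by rw [sub_nonneg, one_le_div hd]; exact hfar a ha)
    rw [← le_div_iff₀ hd]; linarith
  have hm_hi : ∀ a ∈ s, dist (f a) x < ((m a : ℝ) + 1 + 1) * d := fun a _ => by
    have := Nat.lt_floor_add_one (dist (f a) x / d - 1)
    rw [← div_lt_iff₀ hd]; linarith
  set w : ℕ → ℝ := fun n => (16 * ((n : ℝ) + 1) + 8) * ((n : ℝ) + 1) ^ (-α) * d ^ (-α)
  have hw : Summable w := (summable_mul_rpow_neg_of_le_linear hα (fun n => by positivity)
    (C := 24) fun n => by nlinarith [n.cast_nonneg (α := ℝ)]).mul_right _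
  calc ∑ a ∈ s, dist (f a) x ^ (-α)
      ≤ ∑ a ∈ s, ((m a : ℝ) + 1) ^ (-α) * d ^ (-α) := sum_le_sum fun a ha => by
        rw [← Real.mul_rpow (by positivity) hd.le]
        exact Real.rpow_le_rpow_of_nonpos (by positivity) (hm_lo a ha) (by linarith)
    _ = ∑ n ∈ s.image m, #{a ∈ s | m a = n} • (((n : ℝ) + 1) ^ (-α) * d ^ (-α)) :=
        sum_comp (fun n : ℕ => ((n : ℝ) + 1) ^ (-α) * d ^ (-α)) m
    _ ≤ ∑ n ∈ s.image m, w n := sum_le_sum fun n _ => by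
        rw [nsmul_eq_mul, ← mul_assoc]
        refine mul_le_mul_of_nonneg_right ?_ (by positivity)
        refine mul_le_mul_of_nonneg_right ?_ (by positivity)
        refine card_le_of_separated_of_mem_annulus (x := x) hd
          (by linarith [n.cast_nonneg (α := ℝ)])
          (hsep.mono (coe_subset.2 (filter_subset _ _))) (fun a ha => ?_) (fun a ha => ?_) <;>
          obtain ⟨has, rfl⟩ := mem_filter.1 ha
        · exact hm_lo a has
        · exact hm_hi a has
    _ ≤ ∑' n, w n := hw.sum_le_tsum _ fun n _ => by positivity
    _ = _ := tsum_mul_right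

lemma sixteen_mul_add_eight_le_four_mul_ceil {k : ℝ} (hk : 0 ≤ k) :
    16 * k + 8 ≤ 4 * (⌈π * (2 * k + 2)⌉ : ℝ) := by
  nlinarith [Int.le_ceil (π * (2 * k + 2)), pi_gt_three]

lemma tsum_annulus_bound_le (α : ℝ) (hα : 2 < α) :
    ∑' n : ℕ, (16 * ((n : ℝ) + 1) + 8) * ((n : ℝ) + 1) ^ (-α) ≤
      ∑' n : ℕ, 4 * ((⌈π * (2 * ((n : ℝ) + 1) + 2)⌉ : ℤ) : ℝ) * ((n : ℝ) + 1) ^ (-α) := by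
  have hceil_le (n : ℕ) :
      4 * (⌈π * (2 * ((n : ℝ) + 1) + 2)⌉ : ℝ) ≤ (16 * π + 4) * ((n : ℝ) + 1) := by
    nlinarith [Int.ceil_lt_add_one (π * (2 * ((n : ℝ) + 1) + 2)), pi_pos, n.cast_nonneg (α := ℝ)]
  have hlinear (n : ℕ) : 16 * ((n : ℝ) + 1) + 8 ≤ 4 * (⌈π * (2 * ((n : ℝ) + 1) + 2)⌉ : ℝ) :=
    sixteen_mul_add_eight_le_four_mul_ceil (by positivity)
  have hnonneg (n : ℕ) : (0 : ℝ) ≤ 16 * ((n : ℝ) + 1) + 8 := by positivity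
  refine Summable.tsum_le_tsum (fun n => mul_le_mul_of_nonneg_right (hlinear n) (by positivity))
    (summable_mul_rpow_neg_of_le_linear hα hnonneg fun n => (hlinear n).trans (hceil_le n))
    (summable_mul_rpow_neg_of_le_linear hα (fun n => (hnonneg n).trans (hlinear n)) hceil_le)

theorem stmt_3_general {ι : Type*} [DecidableEq ι] (S : Finset ι) (t r : ι → EuclideanSpace ℝ (Fin 2))
    (r_xcl r_tx α : ℝ) (hα : 2 < α) (hxcl : r_tx < r_xcl)
    (htx : ∀ i ∈ S, dist (t i) (r i) ≤ r_tx)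
    (hsep : ∀ i ∈ S, ∀ j ∈ S, i ≠ j → r_xcl ≤ dist (t j) (r i))
    (i : ι) (hi : i ∈ S) :
    ∑ j ∈ S.erase i, dist (t j) (r i) ^ (-α) ≤
      (∑' k : ℕ, 4 * ((⌈Real.pi * (2 * ((k : ℝ) + 1) + 2)⌉ : ℤ) : ℝ) * ((k : ℝ) + 1) ^ (-α))
        * (r_xcl - r_tx) ^ (-α) := by
  have hd : 0 < r_xcl - r_tx := sub_pos.2 hxcl
  have ht_sep : ((S.erase i : Finset ι) : Set ι).Pairwise
      fun a b => r_xcl - r_tx ≤ dist (t a) (t b) := fun a ha b hb hab => by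
    have hbS := mem_of_mem_erase hb
    linarith [hsep b hbS a (mem_of_mem_erase ha) (Ne.symm hab), htx b hbS,
      dist_triangle (t a) (t b) (r b)]
  have hfar : ∀ j ∈ S.erase i, r_xcl - r_tx ≤ dist (t j) (r i) := fun j hj => by
    linarith [hsep i hi j (mem_of_mem_erase hj) (ne_of_mem_erase hj).symm,
      dist_nonneg.trans (htx i hi)]
  exact (sum_dist_rpow_neg_le_of_separated hd hα ht_sep hfar).trans
    (mul_le_mul_of_nonneg_right (tsum_annulus_bound_le α hα) (by positivity))

theorem stmt_3 {ι : Type*} [DecidableEq ι] (S : Finset ι) (t r : ι → EuclideanSpace ℝ (Fin 2))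
    (r_xcl r_tx α : ℝ) (hα : 2 < α) (hrtx : 0 < r_tx) (hxcl : r_tx < r_xcl)
    (htx : ∀ i ∈ S, dist (t i) (r i) ≤ r_tx)
    (hsep : ∀ i ∈ S, ∀ j ∈ S, i ≠ j → r_xcl ≤ dist (t j) (r i))
    (hinj : ∀ i ∈ S, ∀ j ∈ S, t i = t j → i = j)
    (i : ι) (hi : i ∈ S) :
    ∑ j ∈ S.erase i, dist (t j) (r i) ^ (-α) ≤
      (∑' k : ℕ, 4 * ((⌈Real.pi * (2 * ((k : ℝ) + 1) + 2)⌉ : ℤ) : ℝ) * ((k : ℝ) + 1) ^ (-α))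
        * (r_xcl - r_tx) ^ (-α) :=
  stmt_3_general S t r r_xcl r_tx α hα hxcl htx hsep i hi
end

section
/- Let S be a set of links with transmitters t_i ∈ ℝ² satisfying |t_j − t_i| ≥ r_cs > 0 for all distinct i, j ∈ S. Then for every i ∈ S, Σ_{j ∈ S, j ≠ i} |t_j − t_i|^{-α} ≤ k(α)·r_cs^{-α}, where k(α) = Σ_{k=1}^∞ 4·⌈π(2k+2)⌉·k^{-α} and α > 2. -/
/-!
Sort the transmitters `t_j`, `j ≠ i`, into the annuli `m r ≤ |t_j - t_i| ≤ (m + 1) r`, `m ≥ 1`.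
The discs of radius `r / 2` around the transmitters of one annulus are disjoint and fit between
the circles of radii `(m - 1/2) r` and `(m + 3/2) r`, so comparing areas there are at most
`16 m + 8 ≤ 4 ⌈π (2 m + 2)⌉` of them, each contributing at most `(m r)^{-α}`. Summing over `m`
gives the bound; the series converges because `α > 2`.
-/

open Metric MeasureTheory Measure Module

/-- The balls of radius `r / 2` around the points are disjoint, avoid `closedBall c ρ` and lie in
`closedBall c R`; the inequality compares volumes. -/
theorem card_mul_pow_add_pow_le_of_pairwise_le_dist {E ι : Type*} [NormedAddCommGroup E]
    [NormedSpace ℝ E] [FiniteDimensional ℝ E] [Nontrivial E] (T : Finset ι) (t : ι → E) (c : E)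
    {r ρ R : ℝ} (hr : 0 ≤ r) (hρ : 0 ≤ ρ) (hρR : ρ ≤ R)
    (hsep : (T : Set ι).Pairwise fun j j' ↦ r ≤ dist (t j) (t j'))
    (hlo : ∀ j ∈ T, ρ + r / 2 ≤ dist (t j) c) (hhi : ∀ j ∈ T, dist (t j) c + r / 2 ≤ R) :
    T.card * (r / 2) ^ finrank ℝ E + ρ ^ finrank ℝ E ≤ R ^ finrank ℝ E := by
  borelize E
  set μ : Measure E := Measure.addHaar
  set B := ⋃ j ∈ T, ball (t j) (r / 2)
  have hpair : (T : Set ι).PairwiseDisjoint fun j ↦ ball (t j) (r / 2) :=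
    fun j hj j' hj' hne ↦ ball_disjoint_ball (by linarith [hsep hj hj' hne])
  have hdisj : Disjoint B (closedBall c ρ) := by
    simp only [B, Set.disjoint_iUnion_left]
    exact fun j hj ↦ ball_disjoint_closedBall (by linarith [hlo j hj])
  have hsub : B ∪ closedBall c ρ ⊆ closedBall c R := by
    refine Set.union_subset (Set.iUnion₂_subset fun j hj x hx ↦ ?_)
      (closedBall_subset_closedBall hρR)
    have := dist_triangle x (t j) c
    rw [mem_ball] at hx
    exact mem_closedBall.mpr (by linarith [hhi j hj])
  have hvol : μ.real B + μ.real (closedBall c ρ) ≤ μ.real (closedBall c R) := by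
    rw [← measureReal_union hdisj measurableSet_closedBall
      (measure_biUnion_lt_top T.finite_toSet fun _ _ ↦ measure_ball_lt_top).ne
      measure_closedBall_lt_top.ne]
    exact measureReal_mono hsub measure_closedBall_lt_top.ne
  have hB : μ.real B = T.card * ((r / 2) ^ finrank ℝ E * μ.real (ball 0 1)) := by
    rw [measureReal_biUnion_finset hpair fun _ _ ↦ measurableSet_ball]
    simp [← addHaar_real_closedBall_eq_addHaar_real_ball,
      addHaar_real_closedBall μ _ (by positivity : 0 ≤ r / 2)]
  rw [hB, addHaar_real_closedBall μ c hρ, addHaar_real_closedBall μ c (hρ.trans hρR),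
    ← mul_assoc, ← add_mul] at hvol
  exact le_of_mul_le_mul_right hvol
    (ENNReal.toReal_pos (measure_ball_pos μ 0 one_pos).ne' measure_ball_lt_top.ne)

theorem card_le_of_pairwise_le_dist_of_mem_annulus {ι : Type*} (T : Finset ι)
    (t : ι → EuclideanSpace ℝ (Fin 2)) (c : EuclideanSpace ℝ (Fin 2)) {r m : ℝ} (hr : 0 < r)
    (hm : 1 / 2 ≤ m) (hsep : (T : Set ι).Pairwise fun j j' ↦ r ≤ dist (t j) (t j'))
    (hmem : ∀ j ∈ T, dist (t j) c ∈ Set.Icc (m * r) ((m + 1) * r)) :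
    (T.card : ℝ) ≤ 16 * m + 8 := by
  have hpack := card_mul_pow_add_pow_le_of_pairwise_le_dist T t c (ρ := (m - 1 / 2) * r)
    (R := (m + 3 / 2) * r) hr.le (by nlinarith) (by nlinarith) hsep
    (fun j hj ↦ by linarith [(hmem j hj).1]) (fun j hj ↦ by linarith [(hmem j hj).2])
  rw [finrank_euclideanSpace_fin] at hpack
  refine le_of_mul_le_mul_right ?_ (by positivity : 0 < r ^ 2 / 4)
  linarith

theorem sum_dist_rpow_neg_le_of_pairwise_le_dist_of_mem_annulus {ι : Type*} (T : Finset ι)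
    (t : ι → EuclideanSpace ℝ (Fin 2)) (c : EuclideanSpace ℝ (Fin 2)) {r m α : ℝ} (hr : 0 < r)
    (hm : 1 / 2 ≤ m) (hα : 0 ≤ α) (hsep : (T : Set ι).Pairwise fun j j' ↦ r ≤ dist (t j) (t j'))
    (hmem : ∀ j ∈ T, dist (t j) c ∈ Set.Icc (m * r) ((m + 1) * r)) :
    ∑ j ∈ T, dist (t j) c ^ (-α) ≤ (16 * m + 8) * m ^ (-α) * r ^ (-α) := by
  have hmr : 0 < m * r := by positivity
  calc ∑ j ∈ T, dist (t j) c ^ (-α)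
      ≤ ∑ _j ∈ T, (m * r) ^ (-α) :=
        Finset.sum_le_sum fun j hj ↦
          Real.rpow_le_rpow_of_nonpos hmr (hmem j hj).1 (neg_nonpos.mpr hα)
    _ = T.card * (m * r) ^ (-α) := by rw [Finset.sum_const, nsmul_eq_mul]
    _ ≤ (16 * m + 8) * (m * r) ^ (-α) := by
        gcongr
        exact card_le_of_pairwise_le_dist_of_mem_annulus T t c hr hm hsep hmem
    _ = (16 * m + 8) * m ^ (-α) * r ^ (-α) := by
        rw [Real.mul_rpow (by positivity) hr.le, mul_assoc]

theorem sum_le_tsum_of_sum_fiberwise_le {ι β : Type*} [DecidableEq β] (s : Finset ι) (g : ι → ℝ)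
    (bin : ι → β) {b : β → ℝ} (hb : Summable b) (hb0 : ∀ k, 0 ≤ b k)
    (hfiber : ∀ k, ∑ j ∈ s with bin j = k, g j ≤ b k) :
    ∑ j ∈ s, g j ≤ ∑' k, b k :=
  calc ∑ j ∈ s, g j
      = ∑ k ∈ s.image bin, ∑ j ∈ s with bin j = k, g j :=
        (Finset.sum_fiberwise_of_maps_to (fun _ ↦ Finset.mem_image_of_mem bin) g).symm
    _ ≤ ∑ k ∈ s.image bin, b k := Finset.sum_le_sum fun k _ ↦ hfiber k
    _ ≤ ∑' k, b k := hb.sum_le_tsum _ fun k _ ↦ hb0 k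

theorem mem_Icc_natFloor_div_sub_one {x r : ℝ} (hr : 0 < r) (hx : r ≤ x) :
    x ∈ Set.Icc ((⌊x / r - 1⌋₊ + 1) * r) ((⌊x / r - 1⌋₊ + 1 + 1) * r) := by
  have hlo := Nat.floor_le (sub_nonneg.mpr ((one_le_div hr).mpr hx))
  have hhi := Nat.lt_floor_add_one (x / r - 1)
  constructor
  · rw [← le_div_iff₀ hr]; linarith
  · rw [← div_le_iff₀ hr]; linarith

theorem four_mul_add_two_le_ceil_pi_mul {x : ℝ} (hx : 0 ≤ x) :
    4 * x + 2 ≤ ⌈Real.pi * (2 * x + 2)⌉ := by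
  have := Int.le_ceil (Real.pi * (2 * x + 2))
  nlinarith [Real.pi_gt_three]

theorem summable_ceil_pi_mul_rpow_neg {α : ℝ} (hα : 2 < α) :
    Summable fun k : ℕ ↦
      4 * ((⌈Real.pi * (2 * ((k : ℝ) + 1) + 2)⌉ : ℤ) : ℝ) * ((k : ℝ) + 1) ^ (-α) := by
  have hsucc : Summable fun k : ℕ ↦ ((k : ℝ) + 1) ^ (1 - α) := by
    have := (summable_nat_add_iff 1).mpr (Real.summable_nat_rpow.mpr (by linarith : 1 - α < -1))
    exact_mod_cast this
  refine .of_nonneg_of_le (fun k ↦ by positivity) (fun k ↦ ?_)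
    (hsucc.mul_left (4 * (4 * Real.pi + 1)))
  have hk : (0 : ℝ) < (k : ℝ) + 1 := by positivity
  have hceil : (⌈Real.pi * (2 * ((k : ℝ) + 1) + 2)⌉ : ℝ) ≤ (4 * Real.pi + 1) * ((k : ℝ) + 1) := by
    nlinarith [Int.ceil_lt_add_one (Real.pi * (2 * ((k : ℝ) + 1) + 2)), Real.pi_pos]
  rw [show 1 - α = 1 + -α by ring, Real.rpow_add hk, Real.rpow_one]
  nlinarith [mul_le_mul_of_nonneg_right hceil (by positivity : 0 ≤ ((k : ℝ) + 1) ^ (-α))]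

theorem stmt_4 {ι : Type*} [DecidableEq ι] (S : Finset ι) (t : ι → EuclideanSpace ℝ (Fin 2))
    (r_cs α : ℝ) (hα : 2 < α) (hrcs : 0 < r_cs)
    (hsep : ∀ i ∈ S, ∀ j ∈ S, i ≠ j → r_cs ≤ dist (t j) (t i))
    (i : ι) (hi : i ∈ S) :
    ∑ j ∈ S.erase i, dist (t j) (t i) ^ (-α) ≤
      (∑' k : ℕ, 4 * ((⌈Real.pi * (2 * ((k : ℝ) + 1) + 2)⌉ : ℤ) : ℝ) * ((k : ℝ) + 1) ^ (-α))
        * r_cs ^ (-α) := by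
  have hpair : (S : Set ι).Pairwise fun j j' ↦ r_cs ≤ dist (t j) (t j') :=
    fun j hj j' hj' hne ↦ hsep j' hj' j hj hne.symm
  have hfar : ∀ j ∈ S.erase i, r_cs ≤ dist (t j) (t i) := fun j hj ↦
    hsep i hi j (Finset.mem_of_mem_erase hj) (Finset.ne_of_mem_erase hj).symm
  rw [← tsum_mul_right]
  refine sum_le_tsum_of_sum_fiberwise_le _ _ (fun j ↦ ⌊dist (t j) (t i) / r_cs - 1⌋₊)
    ((summable_ceil_pi_mul_rpow_neg hα).mul_right _) (fun k ↦ by positivity) fun k ↦ ?_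
  have hshell : ∀ j ∈ {j ∈ S.erase i | ⌊dist (t j) (t i) / r_cs - 1⌋₊ = k},
      dist (t j) (t i) ∈ Set.Icc (((k : ℝ) + 1) * r_cs) (((k : ℝ) + 1 + 1) * r_cs) := by
    intro j hj
    obtain ⟨hjS, rfl⟩ := Finset.mem_filter.mp hj
    exact mem_Icc_natFloor_div_sub_one hrcs (hfar j hjS)
  calc _ ≤ (16 * ((k : ℝ) + 1) + 8) * ((k : ℝ) + 1) ^ (-α) * r_cs ^ (-α) :=
        sum_dist_rpow_neg_le_of_pairwise_le_dist_of_mem_annulus _ t (t i) hrcs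
          (by linarith [(k.cast_nonneg : (0 : ℝ) ≤ k)]) (by linarith)
          (hpair.mono ((Finset.filter_subset _ _).trans (Finset.erase_subset i S))) hshell
    _ ≤ _ := by
        gcongr
        linarith [four_mul_add_two_le_ceil_pi_mul (x := (k : ℝ) + 1) (by positivity)]
end

section
/- Fix power P > 0, noise N₀ ≥ 0, thresholds β > 0, β' ≥ (2 + β^{1/α})^α, and path-loss exponent α ≥ 1. Suppose every link i satisfies P·|t_i − r_i|^{-α} ≥ β·N₀ (transmission feasible without interference). If a set S of links satisfies the uni-directional pairwise SINR constraint with threshold β', i.e., for all distinct i, j ∈ S: P·|t_i − r_i|^{-α} / (N₀ + P·|t_j − r_i|^{-α}) ≥ β', then S satisfies the bi-directional pairwise SINR constraint with threshold β: for all distinct i, j ∈ S, P·|t_i − r_i|^{-α} / (N₀ + P·(dist(i,j))^{-α}) ≥ β, where dist(i,j) = min(|t_j − r_i|, |r_j − t_i|, |r_j − r_i|, |t_j − t_i|). -/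
/-!
The uni-directional constraint with threshold `β' = c ^ α` puts every interfering transmitter at
distance at least `c` times the length of the link it disturbs. Hence two links `i, j` are short
compared to `M = max (|t_j - r_i|, |r_j - t_i|)`: their lengths sum to at most `2M / c`, so by the
triangle inequality all four endpoint distances are at least `(1 - 2 / c) M`. Since
`c ≥ 2 + β ^ (1 / α)`, this gives `β ^ (1 / α) |t_j - r_i| ≤ c · dist(i, j)`, which is exactly
the loss of threshold from `β'` to `β` incurred by replacing `|t_j - r_i|` with `dist(i, j)`.
-/

open Real

/-- Signal-to-interference-plus-noise ratio of a link of length `ℓ` with one interferer at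
distance `D`. -/
noncomputable def sinr (P N0 α ℓ D : ℝ) : ℝ := P * ℓ ^ (-α) / (N0 + P * D ^ (-α))

lemma mul_rpow_neg_le_mul_rpow_neg_iff {a b x y α : ℝ} (ha : 0 ≤ a) (hb : 0 ≤ b)
    (hx : 0 < x) (hy : 0 < y) (hα : 0 < α) :
    a * x ^ (-α) ≤ b * y ^ (-α) ↔ a ^ (1 / α) * y ≤ b ^ (1 / α) * x := by
  rw [rpow_neg hx.le, rpow_neg hy.le, ← div_eq_mul_inv, ← div_eq_mul_inv,
    div_le_div_iff₀ (by positivity) (by positivity),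
    ← rpow_le_rpow_iff (x := a ^ (1 / α) * y) (by positivity) (by positivity) hα,
    mul_rpow (by positivity) hy.le, mul_rpow (by positivity) hx.le, one_div,
    rpow_inv_rpow ha hα.ne', rpow_inv_rpow hb hα.ne']

lemma rpow_one_div_mul_le_of_le_sinr {P N0 α β ℓ D : ℝ} (hP : 0 < P) (hN : 0 ≤ N0)
    (hα : 0 < α) (hβ : 0 ≤ β) (hℓ : 0 ≤ ℓ) (hD : 0 < D) (h : β ≤ sinr P N0 α ℓ D) :
    β ^ (1 / α) * ℓ ≤ D := by
  rcases hℓ.eq_or_lt with rfl | hℓ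
  · simpa using hD.le
  rw [sinr, le_div_iff₀ (by positivity)] at h
  have hinterf : β * D ^ (-α) ≤ 1 * ℓ ^ (-α) :=
    le_of_mul_le_mul_left (by linarith [mul_nonneg hβ hN]) hP
  simpa using (mul_rpow_neg_le_mul_rpow_neg_iff hβ zero_le_one hD hℓ hα).mp hinterf

lemma le_sinr_of_le_sinr {P N0 α β β' ℓ d D : ℝ} (hP : 0 < P) (hN : 0 ≤ N0) (hα : 0 < α)
    (hβ : 0 ≤ β) (hββ' : β ≤ β') (hd : 0 < d) (hD : 0 < D)
    (hdD : β ^ (1 / α) * D ≤ β' ^ (1 / α) * d) (h : β' ≤ sinr P N0 α ℓ D) :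
    β ≤ sinr P N0 α ℓ d := by
  have hinterf : β * d ^ (-α) ≤ β' * D ^ (-α) :=
    (mul_rpow_neg_le_mul_rpow_neg_iff hβ (hβ.trans hββ') hd hD hα).mpr hdD
  rw [sinr, le_div_iff₀ (by positivity)] at h ⊢
  calc β * (N0 + P * d ^ (-α)) = β * N0 + P * (β * d ^ (-α)) := by ring
    _ ≤ β' * N0 + P * (β' * D ^ (-α)) := by gcongr
    _ = β' * (N0 + P * D ^ (-α)) := by ring
    _ ≤ _ := h

lemma max_sub_le_min_cross_dist {X : Type*} [PseudoMetricSpace X] (ti ri tj rj : X) :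
    max (dist tj ri) (dist rj ti) - (dist ti ri + dist tj rj) ≤
      min (min (dist tj ri) (dist rj ti)) (min (dist rj ri) (dist tj ti)) := by
  simp only [sub_le_iff_le_add, max_le_iff, le_min_iff]
  refine ⟨⟨⟨?_, ?_⟩, ?_, ?_⟩, ⟨?_, ?_⟩, ?_, ?_⟩ <;>
    linarith [dist_triangle4 tj rj ti ri, dist_triangle4 rj tj ri ti, dist_triangle tj rj ri,
      dist_triangle tj ti ri, dist_triangle rj ri ti, dist_triangle rj tj ti, dist_comm rj tj,
      dist_comm ri ti, dist_nonneg (x := ti) (y := ri), dist_nonneg (x := tj) (y := rj)]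

lemma mul_dist_le_mul_min_cross_dist {X : Type*} [PseudoMetricSpace X] {ti ri tj rj : X}
    {b c : ℝ} (hb : 0 ≤ b) (hc : 2 + b ≤ c) (hi : c * dist ti ri ≤ dist tj ri)
    (hj : c * dist tj rj ≤ dist rj ti) :
    b * dist tj ri ≤
      c * min (min (dist tj ri) (dist rj ti)) (min (dist rj ri) (dist tj ti)) := by
  set M := max (dist tj ri) (dist rj ti)
  calc b * dist tj ri ≤ b * M := by gcongr; exact le_max_left _ _
    _ ≤ (c - 2) * M := by gcongr; linarith
    _ ≤ c * (M - (dist ti ri + dist tj rj)) := by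
      linarith [le_max_left (dist tj ri) (dist rj ti), le_max_right (dist tj ri) (dist rj ti)]
    _ ≤ _ := mul_le_mul_of_nonneg_left (max_sub_le_min_cross_dist ti ri tj rj) (by linarith)

theorem stmt_7_general {ι : Type*} (S : Finset ι) (t r : ι → EuclideanSpace ℝ (Fin 2))
    (P N0 α β β' : ℝ) (hP : 0 < P) (hN : 0 ≤ N0) (hβ : 0 < β) (hα : 1 ≤ α)
    (hβ' : β' ≥ (2 + β ^ (1 / α)) ^ α)
    (hdistpos : ∀ i ∈ S, ∀ j ∈ S, i ≠ j →
      0 < min (min (dist (t j) (r i)) (dist (r j) (t i)))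
              (min (dist (r j) (r i)) (dist (t j) (t i))))
    (huni : ∀ i ∈ S, ∀ j ∈ S, i ≠ j →
      β' ≤ P * dist (t i) (r i) ^ (-α) / (N0 + P * dist (t j) (r i) ^ (-α))) :
    ∀ i ∈ S, ∀ j ∈ S, i ≠ j →
      β ≤ P * dist (t i) (r i) ^ (-α) /
        (N0 + P * (min (min (dist (t j) (r i)) (dist (r j) (t i)))
                       (min (dist (r j) (r i)) (dist (t j) (t i)))) ^ (-α)) := by
  intro i hi j hj hij
  have hα0 : 0 < α := by linarith
  set b := β ^ (1 / α)
  have hβ'0 : 0 < β' := (by positivity : 0 < (2 + b) ^ α).trans_le hβ'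
  have hc : 2 + b ≤ β' ^ (1 / α) := by
    rw [one_div, le_rpow_inv_iff_of_pos (by positivity) hβ'0.le hα0]
    exact hβ'
  have hββ' : β ≤ β' :=
    (rpow_le_rpow_iff hβ.le hβ'0.le (one_div_pos.mpr hα0)).mp (by linarith)
  have hd := hdistpos i hi j hj hij
  have hD : 0 < dist (t j) (r i) := hd.trans_le ((min_le_left _ _).trans (min_le_left _ _))
  have hE : 0 < dist (r j) (t i) := hd.trans_le ((min_le_left _ _).trans (min_le_right _ _))
  have hli := rpow_one_div_mul_le_of_le_sinr hP hN hα0 hβ'0.le dist_nonneg hD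
    (huni i hi j hj hij)
  have hlj := rpow_one_div_mul_le_of_le_sinr (ℓ := dist (t j) (r j)) hP hN hα0 hβ'0.le
    dist_nonneg hE (by rw [sinr, dist_comm (r j) (t i)]; exact huni j hj i hi hij.symm)
  exact le_sinr_of_le_sinr hP hN hα0 hβ.le hββ' hd hD
    (mul_dist_le_mul_min_cross_dist (by positivity) hc hli hlj) (huni i hi j hj hij)

theorem stmt_7 {ι : Type*} (S : Finset ι) (t r : ι → EuclideanSpace ℝ (Fin 2))
    (P N0 α β β' : ℝ) (hP : 0 < P) (hN : 0 ≤ N0) (hβ : 0 < β) (hα : 1 ≤ α)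
    (hβ' : β' ≥ (2 + β ^ (1 / α)) ^ α)
    (hlen : ∀ i ∈ S, 0 < dist (t i) (r i))
    (hfeas : ∀ i ∈ S, β * N0 ≤ P * dist (t i) (r i) ^ (-α))
    (hdistpos : ∀ i ∈ S, ∀ j ∈ S, i ≠ j →
      0 < min (min (dist (t j) (r i)) (dist (r j) (t i)))
              (min (dist (r j) (r i)) (dist (t j) (t i))))
    (huni : ∀ i ∈ S, ∀ j ∈ S, i ≠ j →
      β' ≤ P * dist (t i) (r i) ^ (-α) / (N0 + P * dist (t j) (r i) ^ (-α))) :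
    ∀ i ∈ S, ∀ j ∈ S, i ≠ j →
      β ≤ P * dist (t i) (r i) ^ (-α) /
        (N0 + P * (min (min (dist (t j) (r i)) (dist (r j) (t i)))
                       (min (dist (r j) (r i)) (dist (t j) (t i)))) ^ (-α)) :=
  stmt_7_general S t r P N0 α β β' hP hN hβ hα hβ' hdistpos huni
end

section
/- For the noise-free (SIR) case: if Δ' ≥ Δ + 2 with Δ > 0, then any set S of links satisfying the uni-directional pairwise SIR constraint |t_j − r_i| ≥ (1+Δ')·|t_i − r_i| for all distinct i, j ∈ S also satisfies the bi-directional pairwise SIR constraint dist(i,j) ≥ (1+Δ)·|t_i − r_i| for all distinct i, j ∈ S, where dist(i,j) = min(|t_j − r_i|, |r_j − t_i|, |r_j − r_i|, |t_j − t_i|). Moreover, the bi-directional constraint with parameter Δ trivially implies the uni-directional constraint with parameter Δ. -/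
/-!
Write `dᵢ = dist tᵢ rᵢ`. The uni-directional constraints for the ordered pairs `(i, j)` and
`(j, i)` bound the two cross distances `dist tⱼ rᵢ` and `dist tᵢ rⱼ` from below; every other
distance between the endpoints of the two links is compared with one of these by a triangle
inequality that loses at most `dᵢ + dⱼ`, and splitting on which of `dᵢ`, `dⱼ` is larger absorbs
that loss into the gap `Δ' - Δ ≥ 2`.
-/

namespace SIR

variable {α : Type*} [PseudoMetricSpace α] {ti ri tj rj : α} {Δ Δ' : ℝ}

theorem le_dist_tj_ri (hΔ : Δ ≤ Δ') (hi : (1 + Δ') * dist ti ri ≤ dist tj ri) :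
    (1 + Δ) * dist ti ri ≤ dist tj ri :=
  le_trans (by gcongr) hi

theorem le_dist_tj_ti (hΔ : Δ + 1 ≤ Δ') (hi : (1 + Δ') * dist ti ri ≤ dist tj ri) :
    (1 + Δ) * dist ti ri ≤ dist tj ti := by
  have htri : dist tj ri ≤ dist tj ti + dist ti ri := dist_triangle _ _ _
  nlinarith [dist_nonneg (x := ti) (y := ri)]

theorem le_dist_rj_ri (hΔ : Δ + 1 ≤ Δ') (hΔ' : 0 ≤ 1 + Δ')
    (hi : (1 + Δ') * dist ti ri ≤ dist tj ri) (hj : (1 + Δ') * dist tj rj ≤ dist ti rj) :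
    (1 + Δ) * dist ti ri ≤ dist rj ri := by
  have htri_i : dist tj ri ≤ dist tj rj + dist rj ri := dist_triangle _ _ _
  have htri_j : dist ti rj ≤ dist ti ri + dist ri rj := dist_triangle _ _ _
  rw [dist_comm ri rj] at htri_j
  rcases le_total (dist tj rj) (dist ti ri) with h | h
  · nlinarith [dist_nonneg (x := ti) (y := ri)]
  · nlinarith [dist_nonneg (x := ti) (y := ri), mul_le_mul_of_nonneg_left h hΔ']

theorem le_dist_rj_ti (hΔ : Δ + 2 ≤ Δ') (hΔ' : 0 ≤ 1 + Δ')
    (hi : (1 + Δ') * dist ti ri ≤ dist tj ri) (hj : (1 + Δ') * dist tj rj ≤ dist ti rj) :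
    (1 + Δ) * dist ti ri ≤ dist rj ti := by
  have htri : dist tj ri ≤ dist tj rj + dist rj ti + dist ti ri := dist_triangle4 _ _ _ _
  rw [dist_comm ti rj] at hj
  rcases le_total (dist tj rj) (dist ti ri) with h | h
  · nlinarith [dist_nonneg (x := ti) (y := ri)]
  · nlinarith [dist_nonneg (x := ti) (y := ri), mul_le_mul_of_nonneg_left h hΔ']

theorem le_min_dist_of_uni (hΔ : Δ + 2 ≤ Δ') (hΔ' : 0 ≤ 1 + Δ')
    (hi : (1 + Δ') * dist ti ri ≤ dist tj ri) (hj : (1 + Δ') * dist tj rj ≤ dist ti rj) :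
    (1 + Δ) * dist ti ri ≤
      min (min (dist tj ri) (dist rj ti)) (min (dist rj ri) (dist tj ti)) :=
  le_min (le_min (le_dist_tj_ri (by linarith) hi) (le_dist_rj_ti hΔ hΔ' hi hj))
    (le_min (le_dist_rj_ri (by linarith) hΔ' hi hj) (le_dist_tj_ti (by linarith) hi))

end SIR

theorem stmt_8_general {ι : Type*} (S : Finset ι) (t r : ι → EuclideanSpace ℝ (Fin 2))
    (Δ Δ' : ℝ) (hΔ : 0 < Δ) (hΔ' : Δ' ≥ Δ + 2) :
    ((∀ i ∈ S, ∀ j ∈ S, i ≠ j →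
        (1 + Δ') * dist (t i) (r i) ≤ dist (t j) (r i)) →
      ∀ i ∈ S, ∀ j ∈ S, i ≠ j →
        (1 + Δ) * dist (t i) (r i) ≤
          min (min (dist (t j) (r i)) (dist (r j) (t i)))
              (min (dist (r j) (r i)) (dist (t j) (t i))))
    ∧ ((∀ i ∈ S, ∀ j ∈ S, i ≠ j →
        (1 + Δ) * dist (t i) (r i) ≤
          min (min (dist (t j) (r i)) (dist (r j) (t i)))
              (min (dist (r j) (r i)) (dist (t j) (t i)))) →
      ∀ i ∈ S, ∀ j ∈ S, i ≠ j →
        (1 + Δ) * dist (t i) (r i) ≤ dist (t j) (r i)) := by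
  refine ⟨fun h i hi j hj hij => ?_, fun h i hi j hj hij => ?_⟩
  · exact SIR.le_min_dist_of_uni hΔ' (by linarith) (h i hi j hj hij) (h j hj i hi hij.symm)
  · exact (h i hi j hj hij).trans ((min_le_left _ _).trans (min_le_left _ _))

theorem stmt_8 {ι : Type*} (S : Finset ι) (t r : ι → EuclideanSpace ℝ (Fin 2))
    (Δ Δ' : ℝ) (hΔ : 0 < Δ) (hΔ' : Δ' ≥ Δ + 2)
    (hlen : ∀ i ∈ S, 0 < dist (t i) (r i)) :
    ((∀ i ∈ S, ∀ j ∈ S, i ≠ j →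
        (1 + Δ') * dist (t i) (r i) ≤ dist (t j) (r i)) →
      ∀ i ∈ S, ∀ j ∈ S, i ≠ j →
        (1 + Δ) * dist (t i) (r i) ≤
          min (min (dist (t j) (r i)) (dist (r j) (t i)))
              (min (dist (r j) (r i)) (dist (t j) (t i))))
    ∧ ((∀ i ∈ S, ∀ j ∈ S, i ≠ j →
        (1 + Δ) * dist (t i) (r i) ≤
          min (min (dist (t j) (r i)) (dist (r j) (t i)))
              (min (dist (r j) (r i)) (dist (t j) (t i)))) →
      ∀ i ∈ S, ∀ j ∈ S, i ≠ j →
        (1 + Δ) * dist (t i) (r i) ≤ dist (t j) (r i)) :=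
  stmt_8_general S t r Δ Δ' hΔ hΔ'
end

section
/- Let r_tx = max over links i of |t_i − r_i| and suppose r_xcl ≥ (((P/β)·r_tx^{-α} − N₀)/P)^{-1/α}, where (P/β)·r_tx^{-α} > N₀. Then any set S of links satisfying the pairwise fixed-range constraints (|t_j − r_i| ≥ r_xcl for distinct i,j ∈ S and |t_i − r_i| ≤ r_tx for i ∈ S) also satisfies the pairwise SINR constraint: for all distinct i, j ∈ S, P·|t_i − r_i|^{-α} / (N₀ + P·|t_j − r_i|^{-α}) ≥ β. -/
/-!
The exclusion radius is chosen so that noise plus the strongest admissible interference,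
`N₀ + P r_xcl^{-α}`, equals `P r_tx^{-α} / β`, the received power of the longest admissible link
divided by `β`. Since `x ↦ x^{-α}` is antitone, shorter links only raise the signal and more
distant interferers only lower the interference, so every SINR stays at least `β`.
-/

open Real

lemma rpow_neg_le_of_rpow_neg_inv_le {K D α : ℝ} (hK : 0 < K) (hα : 0 < α)
    (h : K ^ (-(1 / α)) ≤ D) : D ^ (-α) ≤ K :=
  calc D ^ (-α) ≤ (K ^ (-(1 / α))) ^ (-α) :=
        rpow_le_rpow_of_nonpos (rpow_pos_of_pos hK _) h (by linarith)
    _ = K := by rw [← rpow_mul hK.le, show -(1 / α) * -α = 1 by field_simp, rpow_one]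

lemma le_sinr_of_le_of_exclusion_le {P N0 α β r_tx d D : ℝ} (hP : 0 < P) (hN : 0 ≤ N0)
    (hβ : 0 < β) (hα : 0 < α) (hnoise : N0 < (P / β) * r_tx ^ (-α))
    (hd : 0 < d) (hdr : d ≤ r_tx)
    (hD : (((P / β) * r_tx ^ (-α) - N0) / P) ^ (-(1 / α)) ≤ D) :
    β ≤ P * d ^ (-α) / (N0 + P * D ^ (-α)) := by
  set K := ((P / β) * r_tx ^ (-α) - N0) / P with hK_def
  have hK : 0 < K := div_pos (by linarith) hP
  have hD_pos : 0 < D := (rpow_pos_of_pos hK _).trans_le hD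
  have h_interference : D ^ (-α) ≤ K := rpow_neg_le_of_rpow_neg_inv_le hK hα hD
  have h_signal : r_tx ^ (-α) ≤ d ^ (-α) := rpow_le_rpow_of_nonpos hd hdr (by linarith)
  have h_balance : β * (N0 + P * K) = P * r_tx ^ (-α) := by
    rw [hK_def]; field_simp; ring
  rw [le_div_iff₀ (by positivity)]
  calc β * (N0 + P * D ^ (-α)) ≤ β * (N0 + P * K) := by gcongr
    _ = P * r_tx ^ (-α) := h_balance
    _ ≤ P * d ^ (-α) := by gcongr

theorem stmt_11_general {ι : Type*} (S : Finset ι) (t r : ι → EuclideanSpace ℝ (Fin 2))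
    (P N0 α β r_xcl r_tx : ℝ) (hP : 0 < P) (hN : 0 ≤ N0) (hβ : 0 < β) (hα : 0 < α)
    (hnoise : N0 < (P / β) * r_tx ^ (-α))
    (hxcl : r_xcl ≥ (((P / β) * r_tx ^ (-α) - N0) / P) ^ (-(1 / α)))
    (hlen : ∀ i ∈ S, 0 < dist (t i) (r i))
    (htx : ∀ i ∈ S, dist (t i) (r i) ≤ r_tx)
    (hsep : ∀ i ∈ S, ∀ j ∈ S, i ≠ j → r_xcl ≤ dist (t j) (r i)) :
    ∀ i ∈ S, ∀ j ∈ S, i ≠ j →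
      β ≤ P * dist (t i) (r i) ^ (-α) / (N0 + P * dist (t j) (r i) ^ (-α)) :=
  fun i hi j hj hij => le_sinr_of_le_of_exclusion_le hP hN hβ hα hnoise (hlen i hi) (htx i hi)
    (hxcl.trans (hsep i hi j hj hij))

theorem stmt_11 {ι : Type*} (S : Finset ι) (t r : ι → EuclideanSpace ℝ (Fin 2))
    (P N0 α β r_xcl r_tx : ℝ) (hP : 0 < P) (hN : 0 ≤ N0) (hβ : 0 < β) (hα : 0 < α)
    (hrtx : 0 < r_tx)
    (hnoise : N0 < (P / β) * r_tx ^ (-α))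
    (hxcl : r_xcl ≥ (((P / β) * r_tx ^ (-α) - N0) / P) ^ (-(1 / α)))
    (hlen : ∀ i ∈ S, 0 < dist (t i) (r i))
    (htx : ∀ i ∈ S, dist (t i) (r i) ≤ r_tx)
    (hsep : ∀ i ∈ S, ∀ j ∈ S, i ≠ j → r_xcl ≤ dist (t j) (r i)) :
    ∀ i ∈ S, ∀ j ∈ S, i ≠ j →
      β ≤ P * dist (t i) (r i) ^ (-α) / (N0 + P * dist (t j) (r i) ^ (-α)) :=
  stmt_11_general S t r P N0 α β r_xcl r_tx hP hN hβ hα hnoise hxcl hlen htx hsep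
end

section
/- Consider four points t_i, r_i, t_j, r_j in ℝ² with |t_i − r_i| > 0 and |t_j − r_j| > 0. Suppose: (a) P·|t_i − r_i|^{-α}/(N₀ + P·|r_j − r_i|^{-α}) < β, (b) |t_i − r_i| ≥ |t_j − r_j|, and (c) P·|t_i − r_i|^{-α} ≥ β·N₀. Then P·|t_i − r_i|^{-α}/(N₀ + P·|t_j − r_i|^{-α}) < (1 + β^{1/α})^α for α ≥ 1. (Receiver-receiver interference violation implies a bounded transmitter-receiver SINR.) -/
/-!
Write `d, e, f` for the distances `|tᵢ − rᵢ|, |rⱼ − rᵢ|, |tⱼ − rᵢ|` and `x = β^{1/α}`, so that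
`f ≤ |tⱼ − rⱼ| + e ≤ d + e`. If `e < x d`, then `f < (1 + x) d` and the signal term alone gives
`d^{-α} < (1 + x)^α f^{-α}`. Otherwise `x f ≤ (1 + x) e`, i.e. `β e^{-α} ≤ (1 + x)^α f^{-α}`, and since
also `β ≤ (1 + x)^α`, the interference-plus-noise at `rᵢ` from `rⱼ`, scaled by `β`, is dominated by the one
from `tⱼ`, scaled by `(1 + x)^α`; hypothesis (a) then concludes.
-/

open Real

lemma mul_rpow_neg_eq_div_rpow {p a : ℝ} (hp : 0 ≤ p) (ha : 0 ≤ a) (α : ℝ) :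
    p ^ α * a ^ (-α) = (p / a) ^ α := by
  rw [div_rpow hp ha, rpow_neg ha, div_eq_mul_inv]

lemma mul_rpow_neg_le_mul_rpow_neg {p q a b α : ℝ} (hp : 0 ≤ p) (ha : 0 < a) (hb : 0 < b)
    (hα : 0 ≤ α) (h : p * b ≤ q * a) : p ^ α * a ^ (-α) ≤ q ^ α * b ^ (-α) := by
  have hq : 0 ≤ q := nonneg_of_mul_nonneg_left ((mul_nonneg hp hb.le).trans h) ha
  rw [mul_rpow_neg_eq_div_rpow hp ha.le, mul_rpow_neg_eq_div_rpow hq hb.le]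
  exact rpow_le_rpow (by positivity) ((div_le_div_iff₀ ha hb).mpr h) hα

lemma rpow_neg_lt_mul_rpow_neg {q a b α : ℝ} (ha : 0 < a) (hb : 0 < b) (hα : 0 < α)
    (h : b < q * a) : a ^ (-α) < q ^ α * b ^ (-α) := by
  have hq : 0 ≤ q := nonneg_of_mul_nonneg_left (hb.trans h).le ha
  rw [← one_mul (a ^ (-α)), ← one_rpow α, mul_rpow_neg_eq_div_rpow zero_le_one ha.le,
    mul_rpow_neg_eq_div_rpow hq hb.le]
  exact rpow_lt_rpow (by positivity) ((div_lt_div_iff₀ ha hb).mpr (by linarith)) hα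

theorem signal_lt_mul_noise_add_of_le_add {P N0 α β d e f : ℝ} (hP : 0 < P) (hN : 0 ≤ N0)
    (hβ : 0 < β) (hα : 0 < α) (hd : 0 < d) (he : 0 < e) (hf : 0 < f) (hdef : f ≤ d + e)
    (hsinr : P * d ^ (-α) < β * (N0 + P * e ^ (-α))) :
    P * d ^ (-α) < (1 + β ^ (1 / α)) ^ α * (N0 + P * f ^ (-α)) := by
  set x := β ^ (1 / α) with hxdef
  have hx : 0 < x := rpow_pos_of_pos hβ _
  have hxα : x ^ α = β := by rw [hxdef, one_div, rpow_inv_rpow hβ.le hα.ne']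
  have hN' : 0 ≤ (1 + x) ^ α * N0 := by positivity
  rcases lt_or_ge e (x * d) with hnear | hfar
  · have hsignal : d ^ (-α) < (1 + x) ^ α * f ^ (-α) :=
      rpow_neg_lt_mul_rpow_neg hd hf hα (by linarith)
    nlinarith
  · have hβx : β ≤ (1 + x) ^ α := hxα ▸ rpow_le_rpow hx.le (by linarith) hα.le
    have hinterference : β * e ^ (-α) ≤ (1 + x) ^ α * f ^ (-α) :=
      hxα ▸ mul_rpow_neg_le_mul_rpow_neg hx.le he hf hα.le (by nlinarith)
    nlinarith [mul_le_mul_of_nonneg_right hβx hN]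

theorem stmt_12_general (ti ri tj rj : EuclideanSpace ℝ (Fin 2))
    (P N0 α β : ℝ) (hP : 0 < P) (hN : 0 ≤ N0) (hβ : 0 < β) (hα : 1 ≤ α)
    (hi : 0 < dist ti ri)
    (hrr : 0 < dist rj ri) (htr : 0 < dist tj ri)
    (ha : P * dist ti ri ^ (-α) / (N0 + P * dist rj ri ^ (-α)) < β)
    (hb : dist tj rj ≤ dist ti ri) :
    P * dist ti ri ^ (-α) / (N0 + P * dist tj ri ^ (-α)) < (1 + β ^ (1 / α)) ^ α := by
  rw [div_lt_iff₀ (by positivity)]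
  rw [div_lt_iff₀ (by positivity)] at ha
  have htriangle : dist tj ri ≤ dist ti ri + dist rj ri := by
    linarith [dist_triangle tj rj ri]
  exact signal_lt_mul_noise_add_of_le_add hP hN hβ (by linarith) hi hrr htr htriangle ha

theorem stmt_12 (ti ri tj rj : EuclideanSpace ℝ (Fin 2))
    (P N0 α β : ℝ) (hP : 0 < P) (hN : 0 ≤ N0) (hβ : 0 < β) (hα : 1 ≤ α)
    (hi : 0 < dist ti ri) (hj : 0 < dist tj rj)
    (hrr : 0 < dist rj ri) (htr : 0 < dist tj ri)
    (ha : P * dist ti ri ^ (-α) / (N0 + P * dist rj ri ^ (-α)) < β)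
    (hb : dist tj rj ≤ dist ti ri)
    (hc : β * N0 ≤ P * dist ti ri ^ (-α)) :
    P * dist ti ri ^ (-α) / (N0 + P * dist tj ri ^ (-α)) < (1 + β ^ (1 / α)) ^ α :=
  stmt_12_general ti ri tj rj P N0 α β hP hN hβ hα hi hrr htr ha hb
end
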